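/- Let (X, ℓ) and (Y, ℓ′) be filtered vector spaces over a field κ such that ℓ(X ∖ {0}) and ℓ′(Y ∖ {0}) are both well-ordered subsets of ℝ, and let φ : X → Y be a κ-linear isomorphism. Then there is an ℓ-orthogonal basis {v_α} of X such that {φ(v_α)} is an ℓ′-orthogonal basis of Y. -/

import Mathlib

open scoped Classical

universe u v

/-- `ℓ` is a filtration function making `(V, ℓ)` a filtered vector space over `κ`. -/
def IsFiltrationFun (κ : Type u) [Field κ] {V : Type v} [AddCommGroup V] [Module κ V]
    (ℓ : V → WithBot ℝ) : Prop :=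
  (∀ v : V, ℓ v = ⊥ ↔ v = 0) ∧
    (∀ (c : κ) (v : V), c ≠ 0 → ℓ (c • v) = ℓ v) ∧
      ∀ v w : V, ℓ (v + w) ≤ max (ℓ v) (ℓ w)

/-- A subset `S ⊆ V ∖ {0}` is `ℓ`-orthogonal. -/
def IsOrthogonal (κ : Type u) [Field κ] {V : Type v} [AddCommGroup V] [Module κ V]
    (ℓ : V → WithBot ℝ) (S : Set V) : Prop :=
  (0 : V) ∉ S ∧
    ∀ T : Finset V, (T : Set V) ⊆ S → ∀ c : V → κ,
      ℓ (∑ v ∈ T, c v • v) = (T.filter fun v => c v ≠ 0).sup ℓ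

/-- A subset of `ℝ` is well-ordered if every nonempty subset of it has a least element. -/
def WellOrderedSubset (s : Set ℝ) : Prop :=
  ∀ t : Set ℝ, t ⊆ s → t.Nonempty → ∃ a ∈ t, ∀ b ∈ t, a ≤ b

/-! Pull `ℓ'` back along `φ` to a second filtration `m = ℓ' ∘ φ` on `X`; it suffices to find a
basis of `X` that is orthogonal for `ℓ` and `m` at once. Give `x` the bidegree `(ℓ x, m x)`,
ordered by the product order. For each bidegree `p`, choose vectors of bidegree `p` that form a
basis of the vectors of bidegree `p` modulo the span of those of strictly lower bidegree. The
well-ordered value sets make this order well-founded on bidegrees, so by induction the union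
spans `X`. If a combination of these vectors had `ℓ`-value below its top `ℓ`-level, its terms of
top `ℓ`-level and, among those, of top `m`-level would be dependent modulo lower bidegrees; so the
union is `ℓ`-orthogonal, and symmetrically `m`-orthogonal. -/

theorem WellOrderedSubset.isWF {s : Set ℝ} (hs : WellOrderedSubset s) : s.IsWF := by
  refine WellFounded.wellFounded_iff_has_min.2 fun t ht => ?_
  obtain ⟨_, ⟨a, hat, rfl⟩, hmin⟩ :=
    hs (Subtype.val '' t) (Set.image_subset_iff.2 fun a _ => a.2) (ht.image _)
  exact ⟨a, hat, fun b hbt => not_lt.2 (hmin b (Set.mem_image_of_mem _ hbt))⟩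

namespace IsFiltrationFun

variable {κ : Type u} [Field κ] {X : Type v} [AddCommGroup X] [Module κ X] {ℓ : X → WithBot ℝ}

theorem map_zero (hℓ : IsFiltrationFun κ ℓ) : ℓ 0 = ⊥ := (hℓ.1 0).2 rfl

theorem map_smul_le (hℓ : IsFiltrationFun κ ℓ) (c : κ) (x : X) : ℓ (c • x) ≤ ℓ x := by
  by_cases hc : c = 0
  · simp [hc, hℓ.map_zero]
  · exact (hℓ.2.1 c x hc).le

theorem map_sub_le (hℓ : IsFiltrationFun κ ℓ) (x y : X) : ℓ (x - y) ≤ max (ℓ x) (ℓ y) := by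
  have hneg : ℓ (-y) = ℓ y := by simpa using hℓ.2.1 (-1) y (by norm_num)
  simpa [sub_eq_add_neg, hneg] using hℓ.2.2 x (-y)

theorem sum_smul_le (hℓ : IsFiltrationFun κ ℓ) (T : Finset X) (c : X → κ) :
    ℓ (∑ v ∈ T, c v • v) ≤ T.sup ℓ := by
  induction T using Finset.induction_on with
  | empty => simp [hℓ.map_zero]
  | insert a T _ ih =>
    rw [Finset.sum_insert ‹_›, Finset.sup_insert]
    exact (hℓ.2.2 _ _).trans (max_le_max (hℓ.map_smul_le _ _) ih)

theorem isWF_range (hℓ : IsFiltrationFun κ ℓ)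
    (hw : WellOrderedSubset {t : ℝ | ∃ v : X, v ≠ 0 ∧ ℓ v = (t : WithBot ℝ)}) :
    (Set.range ℓ).IsWF := by
  refine ((hw.isWF.isPWO.image_of_monotone WithBot.coe_mono).isWF.insert ⊥).mono ?_
  rintro _ ⟨x, rfl⟩
  by_cases hx : x = 0
  · exact Or.inl (hx ▸ hℓ.map_zero)
  · obtain ⟨t, ht⟩ := WithBot.ne_bot_iff_exists.1 (mt (hℓ.1 x).1 hx)
    exact Or.inr ⟨t, ⟨x, hx, ht.symm⟩, ht⟩

theorem comp {Y : Type v} [AddCommGroup Y] [Module κ Y] {ℓ' : Y → WithBot ℝ}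
    (hℓ' : IsFiltrationFun κ ℓ') {f : X →ₗ[κ] Y} (hf : Function.Injective f) :
    IsFiltrationFun κ (ℓ' ∘ f) :=
  ⟨fun v => (hℓ'.1 (f v)).trans (injective_iff_map_eq_zero' f |>.1 hf v),
    fun c v hc => by simpa using hℓ'.2.1 c (f v) hc,
    fun v w => by simpa using hℓ'.2.2 (f v) (f w)⟩

end IsFiltrationFun

theorem Finset.sum_filter_ne_zero_smul {ι R M : Type*} [Semiring R] [AddCommMonoid M]
    [Module R M] (T : Finset ι) (c : ι → R) (f : ι → M) :
    ∑ i ∈ T with c i ≠ 0, c i • f i = ∑ i ∈ T, c i • f i :=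
  Finset.sum_filter_of_ne fun _ _ h hc => h (by rw [hc, zero_smul])

section Orthogonal

variable {κ : Type u} [Field κ] {X : Type v} [AddCommGroup X] [Module κ X] {ℓ : X → WithBot ℝ}

theorem IsFiltrationFun.isOrthogonal_of_level (hℓ : IsFiltrationFun κ ℓ) {S : Set X}
    (h0 : (0 : X) ∉ S)
    (hlevel : ∀ T : Finset X, (T : Set X) ⊆ S → ∀ (a : WithBot ℝ) (c : X → κ),
      (∀ v ∈ T, ℓ v = a) → ℓ (∑ v ∈ T, c v • v) < a → ∀ v ∈ T, c v = 0) :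
    IsOrthogonal κ ℓ S := by
  refine ⟨h0, fun T hTS c => ?_⟩
  set T' := T.filter fun v => c v ≠ 0
  have hsum : ∑ v ∈ T, c v • v = ∑ v ∈ T', c v • v :=
    (Finset.sum_filter_ne_zero_smul T c id).symm
  set a := T'.sup ℓ
  rw [hsum]
  refine le_antisymm (hℓ.sum_smul_le T' c) (not_lt.1 fun hlt => ?_)
  have ha : a ≠ ⊥ := ne_bot_of_gt hlt
  have hT' : T'.Nonempty := Finset.nonempty_iff_ne_empty.2 fun h => ha (by simp [a, h])
  obtain ⟨v₀, hv₀, hv₀a⟩ := Finset.exists_mem_eq_sup T' hT' ℓ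
  set top := T'.filter fun v => ℓ v = a
  set rest := T'.filter fun v => ℓ v ≠ a
  have hrest : ℓ (∑ v ∈ rest, c v • v) < a := by
    refine (hℓ.sum_smul_le rest c).trans_lt ((Finset.sup_lt_iff (bot_lt_iff_ne_bot.2 ha)).2 ?_)
    intro v hv
    rw [Finset.mem_filter] at hv
    exact lt_of_le_of_ne (Finset.le_sup hv.1) hv.2
  have htop : ℓ (∑ v ∈ top, c v • v) < a := by
    rw [← add_sub_cancel_right (∑ v ∈ top, c v • v) (∑ v ∈ rest, c v • v),
      Finset.sum_filter_add_sum_filter_not]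
    exact (hℓ.map_sub_le _ _).trans_lt (max_lt hlt hrest)
  have htopS : (top : Set X) ⊆ S := fun v hv =>
    hTS (Finset.mem_filter.1 (Finset.mem_filter.1 hv).1).1
  have hv₀top : v₀ ∈ top := Finset.mem_filter.2 ⟨hv₀, hv₀a.symm⟩
  exact (Finset.mem_filter.1 hv₀).2 <| hlevel top htopS a c
    (fun v hv => (Finset.mem_filter.1 hv).2) htop v₀ hv₀top

theorem IsOrthogonal.linearIndepOn {S : Set X} (hS : IsOrthogonal κ ℓ S)
    (hℓ : IsFiltrationFun κ ℓ) : LinearIndepOn κ id S := by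
  refine linearIndepOn_iff'.2 fun T c hTS hsum v hv => by_contra fun hc => hS.1 ?_
  have hle : ℓ v ≤ ℓ (∑ v ∈ T, c v • v) := by
    rw [hS.2 T hTS c]
    exact Finset.le_sup (Finset.mem_filter.2 ⟨hv, hc⟩)
  rw [show ∑ v ∈ T, c v • v = 0 from hsum, hℓ.map_zero, le_bot_iff, hℓ.1] at hle
  exact hle ▸ hTS hv

theorem IsOrthogonal.image {Y : Type v} [AddCommGroup Y] [Module κ Y] {ℓ' : Y → WithBot ℝ}
    {f : X →ₗ[κ] Y} (hf : Function.Injective f) {S : Set X} (hS : IsOrthogonal κ (ℓ' ∘ f) S) :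
    IsOrthogonal κ ℓ' (f '' S) := by
  refine ⟨fun ⟨x, hx, hfx⟩ => hS.1 ((injective_iff_map_eq_zero' f |>.1 hf x).1 hfx ▸ hx),
    fun T hT c => ?_⟩
  obtain ⟨T, hTS, rfl⟩ := Finset.subset_set_image_iff.1 hT
  have := hS.2 T hTS (c ∘ f)
  rw [Finset.sum_image hf.injOn, Finset.filter_image, Finset.sup_image]
  simpa [map_sum] using this

end Orthogonal

section Bigraded

variable (κ : Type u) [Field κ] {X : Type v} [AddCommGroup X] [Module κ X]
  {ℓ m : X → WithBot ℝ} {S : Set X}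

def spanBelow (ℓ m : X → WithBot ℝ) (p : WithBot ℝ × WithBot ℝ) : Submodule κ X :=
  Submodule.span κ {x | (ℓ x, m x) < p}

def IsBigradedIndependent (ℓ m : X → WithBot ℝ) (S : Set X) : Prop :=
  ∀ p, LinearIndepOn κ (spanBelow κ ℓ m p).mkQ {v ∈ S | (ℓ v, m v) = p}

variable {κ}

theorem IsBigradedIndependent.swap (h : IsBigradedIndependent κ ℓ m S) :
    IsBigradedIndependent κ m ℓ S := by
  intro p
  have hspan : spanBelow κ m ℓ p = spanBelow κ ℓ m p.swap := by
    unfold spanBelow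
    congr 1
    ext x
    exact Prod.swap_lt_swap (x := (ℓ x, m x)) (y := p.swap)
  have hdeg : {v ∈ S | (m v, ℓ v) = p} = {v ∈ S | (ℓ v, m v) = p.swap} := by
    ext v
    simp only [Set.mem_ofPred_eq, Prod.ext_iff, Prod.fst_swap, Prod.snd_swap, and_comm]
  rw [hspan, hdeg]
  exact h p.swap

theorem IsBigradedIndependent.isOrthogonal (h : IsBigradedIndependent κ ℓ m S)
    (hℓ : IsFiltrationFun κ ℓ) (hm : IsFiltrationFun κ m) : IsOrthogonal κ ℓ S := by
  refine hℓ.isOrthogonal_of_level (fun h0 => (h (ℓ 0, m 0)).zero_notMem_image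
    ⟨0, ⟨h0, rfl⟩, map_zero _⟩) fun T hTS a c hTa hlt => ?_
  by_contra! hne
  set T' := T.filter fun v => c v ≠ 0
  have hT' : T'.Nonempty := by simpa [T', Finset.Nonempty] using hne
  obtain ⟨v₀, hv₀, hv₀b⟩ := Finset.exists_mem_eq_sup T' hT' m
  set b := T'.sup m
  set E := T'.filter fun v => m v = b
  set rest := T'.filter fun v => ¬ m v = b
  have hsum : ∑ v ∈ T, c v • v = ∑ v ∈ T', c v • v :=
    (Finset.sum_filter_ne_zero_smul T c id).symm
  have hbelow : ∑ v ∈ T', c v • v ∈ spanBelow κ ℓ m (a, b) :=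
    Submodule.subset_span <| Prod.mk_lt_mk.2 <| Or.inl ⟨hsum ▸ hlt, hm.sum_smul_le T' c⟩
  have hrest : ∑ v ∈ rest, c v • v ∈ spanBelow κ ℓ m (a, b) := by
    refine Submodule.sum_mem _ fun v hv => Submodule.smul_mem _ _ (Submodule.subset_span ?_)
    obtain ⟨hvT', hvb⟩ := Finset.mem_filter.1 hv
    exact Prod.mk_lt_mk.2 <| Or.inr
      ⟨(hTa v (Finset.mem_filter.1 hvT').1).le, lt_of_le_of_ne (Finset.le_sup hvT') hvb⟩
  have hE : ∑ v ∈ E, c v • v ∈ spanBelow κ ℓ m (a, b) := by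
    rw [← add_sub_cancel_right (∑ v ∈ E, c v • v) (∑ v ∈ rest, c v • v),
      Finset.sum_filter_add_sum_filter_not]
    exact Submodule.sub_mem _ hbelow hrest
  have hEdeg : (E : Set X) ⊆ {v ∈ S | (ℓ v, m v) = (a, b)} := fun v hv =>
    have hvT := (Finset.mem_filter.1 (Finset.mem_filter.1 hv).1).1
    ⟨hTS hvT, Prod.ext (hTa v hvT) (Finset.mem_filter.1 hv).2⟩
  have hE0 : (spanBelow κ ℓ m (a, b)).mkQ (∑ v ∈ E, c v • v) = 0 := by
    rwa [← LinearMap.mem_ker, Submodule.ker_mkQ]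
  simp only [map_sum, map_smul] at hE0
  exact (Finset.mem_filter.1 hv₀).2 <| linearIndepOn_iff'.1 (h (a, b)) E c hEdeg hE0 v₀
    (Finset.mem_filter.2 ⟨hv₀, hv₀b.symm⟩)

end Bigraded

theorem Submodule.exists_linearIndepOn_mkQ_subset_sup_span {κ : Type u} [Field κ] {X : Type v}
    [AddCommGroup X] [Module κ X] (B : Submodule κ X) (G : Set X) :
    ∃ s ⊆ G, LinearIndepOn κ B.mkQ s ∧ G ⊆ ↑(Submodule.span κ s ⊔ B) := by
  obtain ⟨s, hsG, -, hGs, hs⟩ := exists_linearIndepOn_extension (linearIndepOn_empty κ B.mkQ)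
    (Set.empty_subset G)
  refine ⟨s, hsG, hs, fun x hx => ?_⟩
  have : B.mkQ x ∈ (Submodule.span κ s).map B.mkQ :=
    Submodule.span_image B.mkQ ▸ hGs ⟨x, hx, rfl⟩
  rwa [SetLike.mem_coe, sup_comm, ← Submodule.comap_map_mkQ]

theorem wellFounded_prodMk_lt_of_isWF_range {α γ : Type*} [LinearOrder γ] {ℓ m : α → γ}
    (hℓ : (Set.range ℓ).IsWF) (hm : (Set.range m).IsWF) :
    WellFounded fun x y : α => (ℓ x, m x) < (ℓ y, m y) := by
  have : (Set.range fun x => (ℓ x, m x)).IsWF := (hℓ.isPWO.prod hm.isPWO).isWF.mono <| by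
    rintro _ ⟨x, rfl⟩
    exact ⟨⟨x, rfl⟩, ⟨x, rfl⟩⟩
  exact Set.wellFoundedOn_range.1 this

theorem exists_isBigradedIndependent_span_eq_top {κ : Type u} [Field κ] {X : Type v}
    [AddCommGroup X] [Module κ X] {ℓ m : X → WithBot ℝ}
    (hwf : WellFounded fun x y : X => (ℓ x, m x) < (ℓ y, m y)) :
    ∃ S : Set X, IsBigradedIndependent κ ℓ m S ∧ Submodule.span κ S = ⊤ := by
  choose s hsdeg hsind hsspan using fun p =>
    (spanBelow κ ℓ m p).exists_linearIndepOn_mkQ_subset_sup_span {x | (ℓ x, m x) = p}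
  refine ⟨⋃ p, s p, fun p => ?_, Submodule.eq_top_iff'.2 fun x => ?_⟩
  · have hdeg : {v ∈ ⋃ q, s q | (ℓ v, m v) = p} = s p := by
      ext v
      simp only [Set.mem_ofPred_eq, Set.mem_iUnion]
      refine ⟨fun ⟨⟨q, hv⟩, hvp⟩ => ?_, fun hv => ⟨⟨p, hv⟩, hsdeg p hv⟩⟩
      rwa [← hvp, (hsdeg q hv : (ℓ v, m v) = q)]
    rw [hdeg]
    exact hsind p
  · induction x using hwf.induction with
    | _ x ih =>
      have hbelow : spanBelow κ ℓ m (ℓ x, m x) ≤ Submodule.span κ (⋃ p, s p) :=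
        Submodule.span_le.2 ih
      exact sup_le (Submodule.span_mono (Set.subset_iUnion s (ℓ x, m x))) hbelow (hsspan _ rfl)

/-- Given filtered vector spaces `(X, ℓ)` and `(Y, ℓ')` with well-ordered value sets and
a linear isomorphism `φ : X → Y`, there is an `ℓ`-orthogonal basis `S` of `X` such that
`φ(S)` is an `ℓ'`-orthogonal basis of `Y`. -/
theorem exists_orthogonal_basis_matching_iso (κ : Type u) [Field κ] {X Y : Type v}
    [AddCommGroup X] [Module κ X] [AddCommGroup Y] [Module κ Y]
    (ℓ : X → WithBot ℝ) (ℓ' : Y → WithBot ℝ)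
    (hX : IsFiltrationFun κ ℓ) (hY : IsFiltrationFun κ ℓ')
    (hwX : WellOrderedSubset {t : ℝ | ∃ v : X, v ≠ 0 ∧ ℓ v = (t : WithBot ℝ)})
    (hwY : WellOrderedSubset {t : ℝ | ∃ v : Y, v ≠ 0 ∧ ℓ' v = (t : WithBot ℝ)})
    (φ : X ≃ₗ[κ] Y) :
    ∃ S : Set X,
      IsOrthogonal κ ℓ S ∧ LinearIndependent κ (fun x : S => (x : X)) ∧
        Submodule.span κ S = ⊤ ∧
      IsOrthogonal κ ℓ' (⇑φ '' S) ∧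
        LinearIndependent κ (fun y : ↥(⇑φ '' S) => (y : Y)) ∧
        Submodule.span κ (⇑φ '' S) = ⊤ := by
  have hm : IsFiltrationFun κ (ℓ' ∘ φ) := hY.comp (f := φ.toLinearMap) φ.injective
  have hwm : (Set.range (ℓ' ∘ φ)).IsWF := φ.surjective.range_comp ℓ' ▸ hY.isWF_range hwY
  obtain ⟨S, hS, hspan⟩ := exists_isBigradedIndependent_span_eq_top (κ := κ)
    (wellFounded_prodMk_lt_of_isWF_range (hX.isWF_range hwX) hwm)
  have hSX : IsOrthogonal κ ℓ S := hS.isOrthogonal hX hm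
  have hSY : IsOrthogonal κ ℓ' (φ '' S) :=
    (hS.swap.isOrthogonal hm hX).image (f := φ.toLinearMap) φ.injective
  refine ⟨S, hSX, hSX.linearIndepOn hX, hspan, hSY, hSY.linearIndepOn hY, ?_⟩
  rw [← LinearEquiv.coe_toLinearMap, Submodule.span_image, hspan, Submodule.map_top,
    LinearEquiv.range]
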